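/- Sufficiency via maximized Hamiltonian concavity implies the Hamiltonian inequality: let H : Ω × U → ℝ, ū ∈ U, x̄ ∈ Ω with Ω open convex in a Banach space E, and suppose H*(ξ) := max_{ζ∈U} H(ξ,ζ) exists for all ξ ∈ Ω, H* is concave at x̄ and Gâteaux differentiable at x̄, H(x̄,ū) = H*(x̄) (the maximum principle at x̄), and H(·,ū) is Gâteaux differentiable at x̄. Then for all ξ ∈ Ω and ζ ∈ U: H(x̄,ū) − H(ξ,ζ) ≥ −D_G H*(x̄)·(ξ−x̄), and moreover D_G H*(x̄) = D_G H(·,ū)(x̄). -/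

import Mathlib

/-!
`H(·, ū)` touches `H*` from below at `x̄`, so comparing their difference quotients in the
directions `h` and `-h` forces equal Gâteaux differentials. Concavity of `H*` at `x̄` makes its
differential a supergradient, `H*(ξ) - H*(x̄) ≤ D H*(x̄)(ξ - x̄)`, and `H(ξ, ζ) ≤ H*(ξ)` finishes.
-/

open Filter Set

/-- Gâteaux differentiability of `g` at `x` with differential `L`. -/
def GateauxDiffAt {X : Type*} [NormedAddCommGroup X] [NormedSpace ℝ X]
    (g : X → ℝ) (x : X) (L : X →L[ℝ] ℝ) : Prop :=
  ∀ h : X, Tendsto (fun t : ℝ => t⁻¹ • (g (x + t • h) - g x))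
    (nhdsWithin 0 (Set.Ioi 0)) (nhds (L h))

/-- `g` is concave at the point `x` relative to `G`. -/
def ConcaveAtPt {X : Type*} [NormedAddCommGroup X] [NormedSpace ℝ X]
    (g : X → ℝ) (G : Set X) (x : X) : Prop :=
  ∀ y ∈ G, ∀ t : ℝ, t ∈ Set.Icc (0:ℝ) 1 → (1 - t) • x + t • y ∈ G →
    (1 - t) * g x + t * g y ≤ g ((1 - t) • x + t • y)

open Topology

section

variable {X : Type*} [NormedAddCommGroup X] [NormedSpace ℝ X]

theorem GateauxDiffAt.apply_le_of_eventually_le {f g : X → ℝ} {x : X} {Lf Lg : X →L[ℝ] ℝ}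
    (hf : GateauxDiffAt f x Lf) (hg : GateauxDiffAt g x Lg)
    (hle : ∀ᶠ y in 𝓝 x, f y ≤ g y) (hx : f x = g x) (h : X) : Lf h ≤ Lg h := by
  have hline : Tendsto (fun t : ℝ => x + t • h) (𝓝[>] 0) (𝓝 x) :=
    (Continuous.tendsto' (by fun_prop) 0 x (by simp)).mono_left nhdsWithin_le_nhds
  refine le_of_tendsto_of_tendsto (hf h) (hg h) ?_
  filter_upwards [hline.eventually hle, self_mem_nhdsWithin] with t hft (ht : 0 < t)
  rw [hx]
  exact smul_le_smul_of_nonneg_left (sub_le_sub_right hft _) (inv_nonneg.mpr ht.le)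

theorem GateauxDiffAt.eq_of_eventually_le {f g : X → ℝ} {x : X} {Lf Lg : X →L[ℝ] ℝ}
    (hf : GateauxDiffAt f x Lf) (hg : GateauxDiffAt g x Lg)
    (hle : ∀ᶠ y in 𝓝 x, f y ≤ g y) (hx : f x = g x) : Lf = Lg := by
  ext h
  have hneg := hf.apply_le_of_eventually_le hg hle hx (-h)
  rw [map_neg, map_neg, neg_le_neg_iff] at hneg
  exact le_antisymm (hf.apply_le_of_eventually_le hg hle hx h) hneg

theorem ConcaveAtPt.mul_sub_le {g : X → ℝ} {G : Set X} {x y : X} (hconc : ConcaveAtPt g G x)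
    (hG : Convex ℝ G) (hx : x ∈ G) (hy : y ∈ G) {t : ℝ} (ht : t ∈ Icc (0 : ℝ) 1) :
    t * (g y - g x) ≤ g (x + t • (y - x)) - g x := by
  have hseg : x + t • (y - x) = (1 - t) • x + t • y := by
    rw [smul_sub, sub_smul, one_smul]; abel
  have hc := hconc y hy t ht (hG hx hy (by linarith [ht.2]) ht.1 (by ring))
  rw [hseg]
  linarith

theorem ConcaveAtPt.sub_le_of_gateauxDiffAt {g : X → ℝ} {G : Set X} {x y : X} {L : X →L[ℝ] ℝ}
    (hconc : ConcaveAtPt g G x) (hG : Convex ℝ G) (hx : x ∈ G) (hy : y ∈ G)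
    (hg : GateauxDiffAt g x L) : g y - g x ≤ L (y - x) := by
  refine ge_of_tendsto (hg (y - x)) ?_
  filter_upwards [Ioo_mem_nhdsGT (zero_lt_one' ℝ)] with t ht
  rw [smul_eq_mul, le_inv_mul_iff₀ ht.1]
  exact hconc.mul_sub_le hG hx hy ⟨ht.1.le, ht.2.le⟩

end

theorem maximized_hamiltonian_inequality_general
    {E U : Type*} [NormedAddCommGroup E] [NormedSpace ℝ E]
    (Ω : Set E) (hΩo : IsOpen Ω) (hΩc : Convex ℝ Ω)
    (H : E → U → ℝ) (Hstar : E → ℝ) (xbar : E) (hxbar : xbar ∈ Ω) (ubar : U)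
    (hmaxex : ∀ ξ ∈ Ω, (∃ ζ : U, Hstar ξ = H ξ ζ) ∧ ∀ ζ : U, H ξ ζ ≤ Hstar ξ)
    (hconc : ConcaveAtPt Hstar Ω xbar)
    (Lstar : E →L[ℝ] ℝ) (hGstar : GateauxDiffAt Hstar xbar Lstar)
    (hMP : H xbar ubar = Hstar xbar)
    (L : E →L[ℝ] ℝ) (hGH : GateauxDiffAt (fun ξ => H ξ ubar) xbar L) :
    (∀ ξ ∈ Ω, ∀ ζ : U, -(Lstar (ξ - xbar)) ≤ H xbar ubar - H ξ ζ) ∧ Lstar = L := by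
  refine ⟨fun ξ hξ ζ => ?_, ?_⟩
  · have hsuper := hconc.sub_le_of_gateauxDiffAt hΩc hxbar hξ hGstar
    have hle := (hmaxex ξ hξ).2 ζ
    linarith
  · have hle : ∀ᶠ ξ in 𝓝 xbar, H ξ ubar ≤ Hstar ξ :=
      eventually_of_mem (hΩo.mem_nhds hxbar) fun ξ hξ => (hmaxex ξ hξ).2 ubar
    exact (hGH.eq_of_eventually_le hGstar hle hMP).symm

/-- if the maximized Hamiltonian `H*(ξ) = max_{ζ∈U} H(ξ,ζ)` exists
on `Ω`, is concave at `x̄` and Gâteaux differentiable at `x̄` with differential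
`Lstar`, the maximum principle `H(x̄,ū) = H*(x̄)` holds and `H(·,ū)` is Gâteaux
differentiable at `x̄` with differential `L`, then for all `ξ ∈ Ω`, `ζ ∈ U`:
`H(x̄,ū) − H(ξ,ζ) ≥ −D_G H*(x̄)·(ξ−x̄)`, and `Lstar = L`. -/
theorem maximized_hamiltonian_inequality
    {E U : Type*} [NormedAddCommGroup E] [NormedSpace ℝ E] [CompleteSpace E]
    (Ω : Set E) (hΩo : IsOpen Ω) (hΩc : Convex ℝ Ω) (hΩne : Ω.Nonempty)
    (H : E → U → ℝ) (Hstar : E → ℝ) (xbar : E) (hxbar : xbar ∈ Ω) (ubar : U)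
    (hmaxex : ∀ ξ ∈ Ω, (∃ ζ : U, Hstar ξ = H ξ ζ) ∧ ∀ ζ : U, H ξ ζ ≤ Hstar ξ)
    (hconc : ConcaveAtPt Hstar Ω xbar)
    (Lstar : E →L[ℝ] ℝ) (hGstar : GateauxDiffAt Hstar xbar Lstar)
    (hMP : H xbar ubar = Hstar xbar)
    (L : E →L[ℝ] ℝ) (hGH : GateauxDiffAt (fun ξ => H ξ ubar) xbar L) :
    (∀ ξ ∈ Ω, ∀ ζ : U, -(Lstar (ξ - xbar)) ≤ H xbar ubar - H ξ ζ) ∧ Lstar = L :=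
  maximized_hamiltonian_inequality_general Ω hΩo hΩc H Hstar xbar hxbar ubar hmaxex hconc Lstar
    hGstar hMP L hGH
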